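/- Let K be a complete discretely valued field of characteristic p > 0 with valuation v, and fil_n W_{m+1}(K) the Brylinski–Kato filtration. Let n ≥ 1 and let y ∈ W_{m+1}(K) be such that F(y) − y ∈ fil_n W_{m+1}(K). Then y ∈ fil_{⌊n/p⌋} W_{m+1}(K), where ⌊·⌋ denotes the integer part. -/

import Mathlib

open Multiplicative

/-!
Witt addition is weighted homogeneous: `S_i` has degree `p ^ i` when `X_j` is given weight `p ^ j`.
By the ultrametric inequality the sets `{w | v (w_i) ^ p ^ (m - i) ≤ γ}` are therefore closed under
addition. Let `S` be the largest of the numbers `v (y_i) ^ p ^ (m - i)`. The Frobenius turns it into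
`S ^ p`, and `F y = (F y - y) + y` gives `S ^ p ≤ max γ S`. So either `S ≤ 1`, or `S ^ p ≤ γ = ofAdd n`,
which in `ℤᵐ⁰` means `S ≤ ofAdd ⌊n / p⌋`.
-/

/-- The Brylinski–Kato filtration `fil_n W_{m+1}(K)` (multiplicative normalization:
additive valuation of `x` is `≥ −n` iff `Valued.v x ≤ ofAdd n`). -/
def brylinskiKatoFil (p : ℕ) [Fact p.Prime] (K : Type*) [Field K]
    [Valued K (WithZero (Multiplicative ℤ))] (m : ℕ) (n : ℤ) :
    Set (TruncatedWittVector p (m + 1) K) :=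
  {w | ∀ i : Fin (m + 1),
    (Valued.v (w.coeff i)) ^ (p ^ (m - i.val)) ≤
      ((Multiplicative.ofAdd n : Multiplicative ℤ) : WithZero (Multiplicative ℤ))}

/-- The Frobenius on `W_{m+1}(K)` for `K` of characteristic `p`: the componentwise
`p`-th power map. -/
def wittFrobenius (p : ℕ) [Fact p.Prime] (K : Type*) [Field K] (m : ℕ)
    (w : TruncatedWittVector p (m + 1) K) : TruncatedWittVector p (m + 1) K :=
  TruncatedWittVector.mk p (fun i => w.coeff i ^ p)

open MvPolynomial Finset

namespace MvPolynomial.IsWeightedHomogeneous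

variable {R S σ τ M : Type*} [CommSemiring R] [CommSemiring S] [Algebra R S] [AddCommMonoid M]

theorem aeval_of_smul {w : σ → M} {w' : τ → M} {φ : MvPolynomial σ R} {m : M}
    (hφ : φ.IsWeightedHomogeneous w m) (c : ℕ) (g : σ → MvPolynomial τ S)
    (hg : ∀ s, (g s).IsWeightedHomogeneous w' (c • w s)) :
    (aeval g φ).IsWeightedHomogeneous w' (c • m) := by
  rw [aeval_def, eval₂_eq]
  refine IsWeightedHomogeneous.sum _ _ _ fun d hd => ?_
  rw [← zero_add (c • m)]
  refine (isWeightedHomogeneous_C w' _).mul ?_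
  convert IsWeightedHomogeneous.prod _ _ (fun s => d s • c • w s) fun s _ => (hg s).pow (d s)
  rw [← hφ (mem_support_iff.mp hd), Finsupp.weight_apply, Finsupp.sum, Finset.smul_sum]
  exact Finset.sum_congr rfl fun s _ => smul_comm _ _ _

end MvPolynomial.IsWeightedHomogeneous

namespace WittVector

variable (p : ℕ) {R idx : Type*} [CommRing R]

theorem isWeightedHomogeneous_wittPolynomial (n : ℕ) :
    (wittPolynomial p R n).IsWeightedHomogeneous (p ^ ·) (p ^ n) := by
  refine IsWeightedHomogeneous.sum _ _ _ fun i hi => isWeightedHomogeneous_monomial _ _ _ ?_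
  rw [Finsupp.weight_single, smul_eq_mul, ← pow_add,
    Nat.sub_add_cancel (Nat.lt_succ_iff.mp (mem_range.mp hi))]

theorem isWeightedHomogeneous_xInTermsOfW [Invertible (p : R)] (n : ℕ) :
    (xInTermsOfW p R n).IsWeightedHomogeneous (p ^ ·) (p ^ n) := by
  induction n using Nat.strong_induction_on with
  | _ n ih =>
    rw [xInTermsOfW_eq, ← add_zero (p ^ n)]
    refine IsWeightedHomogeneous.mul ?_ (isWeightedHomogeneous_C _ _)
    refine (isWeightedHomogeneous_X R _ n).sub (IsWeightedHomogeneous.sum _ _ _ fun i hi => ?_)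
    have hi : i < n := mem_range.mp hi
    have := ((ih i hi).pow (p ^ (n - i))).C_mul ((p : R) ^ i)
    rwa [smul_eq_mul, ← pow_add, Nat.sub_add_cancel hi.le] at this

variable [Fact p.Prime]

theorem isWeightedHomogeneous_wittStructureRat {Φ : MvPolynomial idx ℚ} {d : ℕ}
    (hΦ : Φ.IsHomogeneous d) (n : ℕ) :
    (wittStructureRat p Φ n).IsWeightedHomogeneous (fun s : idx × ℕ => p ^ s.2) (d * p ^ n) := by
  refine (isWeightedHomogeneous_xInTermsOfW p n).aeval_of_smul d _ fun k => ?_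
  rw [smul_eq_mul, mul_comm]
  refine IsWeightedHomogeneous.aeval_of_smul (w := fun _ => 1) hΦ (p ^ k) _ fun i => ?_
  rw [smul_eq_mul, mul_one, rename_eq_aeval, ← one_smul ℕ (p ^ k)]
  exact (isWeightedHomogeneous_wittPolynomial (R := ℚ) p k).aeval_of_smul 1 _ fun j => by
    simpa using isWeightedHomogeneous_X ℚ (fun s : idx × ℕ => p ^ s.2) (i, j)

theorem isWeightedHomogeneous_wittStructureInt {Φ : MvPolynomial idx ℤ} {d : ℕ}
    (hΦ : Φ.IsHomogeneous d) (n : ℕ) :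
    (wittStructureInt p Φ n).IsWeightedHomogeneous (fun s : idx × ℕ => p ^ s.2) (d * p ^ n) := by
  intro e he
  refine isWeightedHomogeneous_wittStructureRat p (hΦ.map (Int.castRingHom ℚ)) n ?_
  rw [← map_wittStructureInt, coeff_map]
  simpa using he

theorem isWeightedHomogeneous_wittAdd (n : ℕ) :
    (wittAdd p n).IsWeightedHomogeneous (fun s : Fin 2 × ℕ => p ^ s.2) (p ^ n) := by
  have h := isWeightedHomogeneous_wittStructureInt p
    ((isHomogeneous_X ℤ (0 : Fin 2)).add (isHomogeneous_X ℤ 1)) n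
  rwa [one_mul] at h

end WittVector

namespace Valuation

variable {R Γ : Type*} [CommRing R] [LinearOrderedCommMonoidWithZero Γ] (v : Valuation R Γ)

theorem map_intCast_le_one (k : ℤ) : v k ≤ 1 := by
  induction k using Int.induction_on with
  | zero => simp
  | succ k ih => push_cast at ih ⊢; exact v.map_add_le ih v.map_one.le
  | pred k ih => push_cast at ih ⊢; exact v.map_sub_le ih v.map_one.le

theorem map_add_pow_le {x y : R} {C : ℕ} {γ : Γ} (hx : v x ^ C ≤ γ) (hy : v y ^ C ≤ γ) :
    v (x + y) ^ C ≤ γ := by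
  rcases v.map_add' x y with h | h
  · exact (pow_le_pow_left' h C).trans hx
  · exact (pow_le_pow_left' h C).trans hy

theorem map_aeval_pow_le {σ : Type*} {φ : MvPolynomial σ ℤ} {w : σ → ℕ} {D : ℕ}
    (hφ : φ.IsWeightedHomogeneous w D) (g : σ → R) {C : ℕ} (hC : C ≠ 0) (γ : Γ)
    -- root-free form of `v (g s) ≤ γ ^ (w s / C)`
    (hg : ∀ s, v (g s) ^ C ≤ γ ^ w s) :
    v (aeval g φ) ^ C ≤ γ ^ D := by
  conv_lhs => rw [φ.as_sum, map_sum]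
  refine Finset.sum_induction _ (fun x => v x ^ C ≤ γ ^ D) (fun x y => v.map_add_pow_le)
    (by simp [hC]) fun d hd => ?_
  rw [aeval_monomial, v.map_mul, Finsupp.prod, map_prod, mul_pow, ← Finset.prod_pow,
    ← hφ (mem_support_iff.mp hd), Finsupp.weight_apply, Finsupp.sum, ← Finset.prod_pow_eq_pow_sum]
  refine mul_le_of_le_one_of_le (pow_le_one' (v.map_intCast_le_one _) C)
    (Finset.prod_le_prod' fun s _ => ?_)
  rw [v.map_pow, ← pow_mul, mul_comm, pow_mul, smul_eq_mul, mul_comm, pow_mul]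
  exact pow_le_pow_left' (hg s) _

end Valuation

theorem WithZero.le_ofAdd_ediv_of_pow_le {ε : WithZero (Multiplicative ℤ)} {k : ℕ} (hk : 0 < k)
    {n : ℤ} (h : ε ^ k ≤ ((ofAdd n : Multiplicative ℤ) : WithZero (Multiplicative ℤ))) :
    ε ≤ ((ofAdd (n / k) : Multiplicative ℤ) : WithZero (Multiplicative ℤ)) := by
  induction ε using WithZero.recZeroCoe with
  | zero => exact zero_le
  | coe a =>
    rw [← WithZero.coe_pow, WithZero.coe_le_coe, ← toAdd_le, toAdd_pow, toAdd_ofAdd] at h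
    rw [WithZero.coe_le_coe, ← toAdd_le, toAdd_ofAdd]
    exact Int.le_ediv_of_mul_le (by exact_mod_cast hk) (by simpa [mul_comm] using h)

theorem pow_pow_le_pow_pow_iff {Γ : Type*} [LinearOrderedCommGroupWithZero Γ] {p i m : ℕ}
    (hp : p ≠ 0) (him : i ≤ m) (a γ : Γ) : a ^ p ^ m ≤ γ ^ p ^ i ↔ a ^ p ^ (m - i) ≤ γ := by
  rw [show p ^ m = p ^ (m - i) * p ^ i by rw [← pow_add, Nat.sub_add_cancel him], pow_mul]
  exact pow_le_pow_iff_left₀ zero_le zero_le (pow_ne_zero _ hp)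

theorem le_one_of_pow_le_self {Γ : Type*} [LinearOrderedCommGroupWithZero Γ] {a : Γ} {n : ℕ}
    (hn : 1 < n) (h : a ^ n ≤ a) : a ≤ 1 := by
  by_contra! ha
  exact (lt_self_pow₀ ha hn).not_ge h

namespace WittVector

variable {p : ℕ} [Fact p.Prime] {R Γ : Type*} [CommRing R] [LinearOrderedCommMonoidWithZero Γ]

theorem map_coeff_add_pow_le (v : Valuation R Γ) {x y : WittVector p R} {C : ℕ} (hC : C ≠ 0)
    {γ : Γ} (hx : ∀ j, v (x.coeff j) ^ C ≤ γ ^ p ^ j) (hy : ∀ j, v (y.coeff j) ^ C ≤ γ ^ p ^ j)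
    (n : ℕ) : v ((x + y).coeff n) ^ C ≤ γ ^ p ^ n := by
  rw [add_coeff, peval]
  refine v.map_aeval_pow_le (isWeightedHomogeneous_wittAdd p n) _ hC γ ?_
  rintro ⟨b, j⟩
  fin_cases b
  exacts [hx j, hy j]

end WittVector

namespace TruncatedWittVector

variable (p : ℕ) {R Γ : Type*} [CommRing R] [LinearOrderedCommGroupWithZero Γ]

def filtration (v : Valuation R Γ) (m : ℕ) (γ : Γ) : Set (TruncatedWittVector p (m + 1) R) :=
  {w | ∀ i : Fin (m + 1), v (w.coeff i) ^ p ^ (m - i) ≤ γ}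

variable {p} {v : Valuation R Γ} {m : ℕ}

theorem filtration_mono {γ δ : Γ} (h : γ ≤ δ) : filtration p v m γ ⊆ filtration p v m δ :=
  fun _ hw i => (hw i).trans h

variable [Fact p.Prime]

theorem map_out_coeff_pow_le {γ : Γ} {w : TruncatedWittVector p (m + 1) R}
    (hw : w ∈ filtration p v m γ) (j : ℕ) : v (w.out.coeff j) ^ p ^ m ≤ γ ^ p ^ j := by
  by_cases hj : j < m + 1
  · rw [pow_pow_le_pow_pow_iff (Fact.out : p.Prime).ne_zero (Nat.lt_succ_iff.mp hj),
      show w.out.coeff j = w.coeff ⟨j, hj⟩ from coeff_out w ⟨j, hj⟩]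
    exact hw ⟨j, hj⟩
  · have hzero : w.out.coeff j = 0 := by simp [out, show ¬j ≤ m by omega]
    rw [hzero, map_zero, zero_pow (pow_ne_zero _ (Fact.out : p.Prime).ne_zero)]
    exact zero_le

theorem add_mem_filtration {γ : Γ} {x y : TruncatedWittVector p (m + 1) R}
    (hx : x ∈ filtration p v m γ) (hy : y ∈ filtration p v m γ) :
    x + y ∈ filtration p v m γ := by
  intro i
  have hsum : x + y = WittVector.truncateFun (m + 1) (x.out + y.out) := by
    rw [WittVector.truncateFun_add, truncateFun_out, truncateFun_out]
  rw [hsum, WittVector.coeff_truncateFun, ← pow_pow_le_pow_pow_iff (Fact.out : p.Prime).ne_zero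
    (Nat.lt_succ_iff.mp i.isLt)]
  exact WittVector.map_coeff_add_pow_le v (pow_ne_zero _ (Fact.out : p.Prime).ne_zero)
    (map_out_coeff_pow_le hx) (map_out_coeff_pow_le hy) i

section Frobenius

variable {K : Type*} [Field K] {v : Valuation K Γ}

theorem map_coeff_wittFrobenius_pow (y : TruncatedWittVector p (m + 1) K) (i : Fin (m + 1)) :
    v ((wittFrobenius p K m y).coeff i) ^ p ^ (m - i) = (v (y.coeff i) ^ p ^ (m - i)) ^ p := by
  rw [wittFrobenius, coeff_mk, v.map_pow, ← pow_mul, ← pow_mul, mul_comm]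

theorem mem_filtration_of_wittFrobenius_sub_mem {γ δ : Γ} {y : TruncatedWittVector p (m + 1) K}
    (h : wittFrobenius p K m y - y ∈ filtration p v m γ) (hδ : 1 ≤ δ)
    (hroot : ∀ ε : Γ, ε ^ p ≤ γ → ε ≤ δ) : y ∈ filtration p v m δ := by
  obtain ⟨i₀, -, hmax⟩ := Finset.exists_max_image univ
    (fun i : Fin (m + 1) => v (y.coeff i) ^ p ^ (m - i)) univ_nonempty
  set S := v (y.coeff i₀) ^ p ^ (m - i₀)
  have hy : y ∈ filtration p v m S := fun i => hmax i (mem_univ i)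
  have hFy : wittFrobenius p K m y ∈ filtration p v m (max γ S) := by
    simpa using add_mem_filtration (filtration_mono (le_max_left γ S) h)
      (filtration_mono (le_max_right γ S) hy)
  have hS : S ^ p ≤ max γ S := by
    simpa only [map_coeff_wittFrobenius_pow] using hFy i₀
  refine filtration_mono ?_ hy
  rcases le_max_iff.mp hS with hγ | hS
  · exact hroot S hγ
  · exact (le_one_of_pow_le_self (Fact.out : p.Prime).one_lt hS).trans hδ

end Frobenius

end TruncatedWittVector

theorem brylinskiKatoFil_eq_filtration (p : ℕ) [Fact p.Prime] (K : Type*) [Field K]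
    [Valued K (WithZero (Multiplicative ℤ))] (m : ℕ) (n : ℤ) :
    brylinskiKatoFil p K m n =
      TruncatedWittVector.filtration p Valued.v m
        ((ofAdd n : Multiplicative ℤ) : WithZero (Multiplicative ℤ)) :=
  rfl

theorem stmt9_general (p : ℕ) [Fact p.Prime] (K : Type*) [Field K]
    [Valued K (WithZero (Multiplicative ℤ))]
    (m : ℕ) (n : ℕ) (y : TruncatedWittVector p (m + 1) K)
    (h : wittFrobenius p K m y - y ∈ brylinskiKatoFil p K m (n : ℤ)) :
    y ∈ brylinskiKatoFil p K m ((n / p : ℕ) : ℤ) := by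
  rw [brylinskiKatoFil_eq_filtration] at h ⊢
  refine TruncatedWittVector.mem_filtration_of_wittFrobenius_sub_mem h ?_ fun ε hε => ?_
  · rw [← WithZero.coe_one, WithZero.coe_le_coe, ← ofAdd_zero, ofAdd_le]
    exact Int.natCast_nonneg _
  · rw [Int.natCast_div]
    exact WithZero.le_ofAdd_ediv_of_pow_le (Fact.out : p.Prime).pos hε

/-- Let `K` be a complete discretely valued field of characteristic
`p > 0`.  Let `n ≥ 1` and let `y ∈ W_{m+1}(K)` be such that `F(y) − y ∈ fil_n W_{m+1}(K)`.
Then `y ∈ fil_{⌊n/p⌋} W_{m+1}(K)`. -/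
theorem stmt9 (p : ℕ) [Fact p.Prime] (K : Type*) [Field K] [CharP K p]
    [Valued K (WithZero (Multiplicative ℤ))] [CompleteSpace K]
    (m : ℕ) (n : ℕ) (hn : 1 ≤ n) (y : TruncatedWittVector p (m + 1) K)
    (h : wittFrobenius p K m y - y ∈ brylinskiKatoFil p K m (n : ℤ)) :
    y ∈ brylinskiKatoFil p K m ((n / p : ℕ) : ℤ) :=
  stmt9_general p K m n y h
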